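/- arXiv:1511.07022 — 4 statements merged into one kernel-verified Lean document; each statement's English description precedes it below -/
import Mathlib

section
/- Fix ν > 1. There exist ε₀ > 0 and C > 0 (depending only on ν) such that for every ε ∈ (0, ε₀], every even integer N ≥ 4 with 1/N ≤ ε^ν, every even integer i with 2 ≤ i ≤ N−2, every δ ∈ [0, 2), every integer n₀ with 2 ≤ n₀ ≤ N−1, and every real ζ with ζ ≤ −(1+ε−δ·√(ε²+2ε)), one has [(1 + Nε/n₀)(1 − 2/(N−i+1)) − Nζ/(n₀(N−i+1))] · [1 + (Nε−1)/(n₀−1) − Nζ/((n₀−1)(N−i+1))] ≥ 1 + 2ε − C·ε^ν − 2·b_ε^{(δ)}/(N−i+1) − (1 − c_ε^{(δ)})/(N−i+1)². -/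
/-- `b_ε^{(δ)} := (1+ε)·δ·√(ε²+2ε)` -/
noncomputable def bDelta (ε δ : ℝ) : ℝ := (1 + ε) * δ * Real.sqrt (ε ^ 2 + 2 * ε)

/-- `c_ε^{(δ)} := −(1−δ²)·(ε²+2ε)` -/
noncomputable def cDelta (ε δ : ℝ) : ℝ := -(1 - δ ^ 2) * (ε ^ 2 + 2 * ε)

set_option maxHeartbeats 1000000 in
theorem stmt0 (ν : ℝ) (hν : 1 < ν) :
    ∃ ε₀ > (0:ℝ), ∃ C > (0:ℝ), ∀ ε : ℝ, 0 < ε → ε ≤ ε₀ →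
      ∀ N : ℕ, Even N → 4 ≤ N → 1 / (N : ℝ) ≤ ε ^ ν →
      ∀ i : ℕ, Even i → 2 ≤ i → i + 2 ≤ N →
      ∀ δ : ℝ, 0 ≤ δ → δ < 2 →
      ∀ n₀ : ℕ, 2 ≤ n₀ → n₀ + 1 ≤ N →
      ∀ ζ : ℝ, ζ ≤ -(1 + ε - δ * Real.sqrt (ε ^ 2 + 2 * ε)) →
      ((1 + (N : ℝ) * ε / (n₀ : ℝ)) * (1 - 2 / ((N : ℝ) - (i : ℝ) + 1))
          - (N : ℝ) * ζ / ((n₀ : ℝ) * ((N : ℝ) - (i : ℝ) + 1)))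
        * (1 + ((N : ℝ) * ε - 1) / ((n₀ : ℝ) - 1)
          - (N : ℝ) * ζ / (((n₀ : ℝ) - 1) * ((N : ℝ) - (i : ℝ) + 1)))
      ≥ 1 + 2 * ε - C * ε ^ ν - 2 * bDelta ε δ / ((N : ℝ) - (i : ℝ) + 1)
        - (1 - cDelta ε δ) / ((N : ℝ) - (i : ℝ) + 1) ^ 2 := by
  refine ⟨1/100, by norm_num, 2, by norm_num, ?_⟩
  intro ε hε hε₀ N _hNe _hN4 hNε i _hie _hi2 hiN δ hδ0 hδ2 n₀ hn₀2 hn₀N ζ hζ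
  set s : ℝ := Real.sqrt (ε ^ 2 + 2 * ε) with hs
  set m : ℝ := (N : ℝ) - (i : ℝ) + 1 with hmdef
  clear_value s m
  have hε1 : ε ≤ 1 := by linarith
  have hs0 : 0 ≤ s := hs ▸ Real.sqrt_nonneg _
  have hs2 : s ^ 2 = ε ^ 2 + 2 * ε := by rw [hs]; exact Real.sq_sqrt (by nlinarith)
  have hs015 : s ≤ 3 / 20 := by nlinarith [hs2, hs0]
  have hεν0 : 0 ≤ ε ^ ν := Real.rpow_nonneg hε.le ν
  have hενε : ε ^ ν ≤ ε := by
    calc ε ^ ν ≤ ε ^ (1 : ℝ) := Real.rpow_le_rpow_of_exponent_ge hε hε1 hν.le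
    _ = ε := Real.rpow_one ε
  have hN0 : (0 : ℝ) < N := by
    have : (4 : ℝ) ≤ N := by exact_mod_cast _hN4
    linarith
  have hn₀R : (2 : ℝ) ≤ (n₀ : ℝ) := by exact_mod_cast hn₀2
  have hn₀N' : (n₀ : ℝ) + 1 ≤ N := by exact_mod_cast hn₀N
  have hiN' : (i : ℝ) + 2 ≤ N := by exact_mod_cast hiN
  have hm3 : (3 : ℝ) ≤ m := by rw [hmdef]; linarith
  have hm0 : (0 : ℝ) < m := by linarith
  have hNεν : 1 ≤ (N : ℝ) * ε ^ ν := by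
    rw [div_le_iff₀ hN0] at hNε; linarith
  have hNε1 : 1 ≤ (N : ℝ) * ε := by nlinarith
  have hδs : δ * s ≤ 3 / 10 := by nlinarith [mul_nonneg hδ0 hs0]
  have ht0 : 0 ≤ 1 + ε - δ * s := by linarith
  have hn₀0 : (0 : ℝ) < (n₀ : ℝ) := by linarith
  have hn₀1 : (0 : ℝ) < (n₀ : ℝ) - 1 := by linarith
  have hn₀leN : (n₀ : ℝ) ≤ N := by linarith
  have h2m : 2 / m ≤ 2 / 3 := by
    rw [div_le_div_iff₀ hm0 (by norm_num)]; linarith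
  have h2 : (0 : ℝ) ≤ 1 - 2 / m := by linarith
  have h1 : ε ≤ (N : ℝ) * ε / (n₀ : ℝ) := by
    rw [le_div_iff₀ hn₀0]
    nlinarith [mul_le_mul_of_nonneg_left hn₀leN hε.le]
  have h3 : (1 + ε - δ * s) / m ≤ -((N : ℝ) * ζ / ((n₀ : ℝ) * m)) := by
    rw [← neg_div, div_le_div_iff₀ hm0 (by positivity)]
    nlinarith [mul_nonneg (mul_nonneg (sub_nonneg.mpr hn₀leN) ht0) hm0.le,
      mul_nonneg (mul_nonneg hN0.le (by linarith : (0:ℝ) ≤ -ζ - (1 + ε - δ * s))) hm0.le]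
  have h4 : ε - ε ^ ν ≤ ((N : ℝ) * ε - 1) / ((n₀ : ℝ) - 1) := by
    rw [le_div_iff₀ hn₀1]
    nlinarith [mul_nonneg (sub_nonneg.mpr hενε) (by linarith : (0:ℝ) ≤ (N : ℝ) - ((n₀ : ℝ) - 1))]
  have h5 : (1 + ε - δ * s) / m ≤ -((N : ℝ) * ζ / (((n₀ : ℝ) - 1) * m)) := by
    rw [← neg_div, div_le_div_iff₀ hm0 (by positivity)]
    nlinarith [mul_nonneg (mul_nonneg (by linarith : (0:ℝ) ≤ (N : ℝ) - ((n₀ : ℝ) - 1)) ht0) hm0.le,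
      mul_nonneg (mul_nonneg hN0.le (by linarith : (0:ℝ) ≤ -ζ - (1 + ε - δ * s))) hm0.le]
  have hA' : (1 + ε) * (1 - 2 / m) + (1 + ε - δ * s) / m ≤
      (1 + (N : ℝ) * ε / (n₀ : ℝ)) * (1 - 2 / m) - (N : ℝ) * ζ / ((n₀ : ℝ) * m) := by
    have e1 : (1 + ε) * (1 - 2 / m) ≤ (1 + (N : ℝ) * ε / (n₀ : ℝ)) * (1 - 2 / m) :=
      mul_le_mul_of_nonneg_right (by linarith) h2
    linarith
  have hB' : 1 + (ε - ε ^ ν) + (1 + ε - δ * s) / m ≤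
      1 + ((N : ℝ) * ε - 1) / ((n₀ : ℝ) - 1) - (N : ℝ) * ζ / (((n₀ : ℝ) - 1) * m) := by
    linarith
  have htm0 : 0 ≤ (1 + ε - δ * s) / m := div_nonneg ht0 hm0.le
  have hA'pos : 0 ≤ (1 + ε) * (1 - 2 / m) + (1 + ε - δ * s) / m :=
    add_nonneg (mul_nonneg (by linarith) h2) htm0
  have hB'pos : 0 ≤ 1 + (ε - ε ^ ν) + (1 + ε - δ * s) / m := by linarith
  have hApos : 0 ≤ (1 + (N : ℝ) * ε / (n₀ : ℝ)) * (1 - 2 / m) - (N : ℝ) * ζ / ((n₀ : ℝ) * m) :=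
    le_trans hA'pos hA'
  have hmain : ((1 + ε) * (1 - 2 / m) + (1 + ε - δ * s) / m)
      * (1 + (ε - ε ^ ν) + (1 + ε - δ * s) / m) ≤
      ((1 + (N : ℝ) * ε / (n₀ : ℝ)) * (1 - 2 / m) - (N : ℝ) * ζ / ((n₀ : ℝ) * m))
      * (1 + ((N : ℝ) * ε - 1) / ((n₀ : ℝ) - 1) - (N : ℝ) * ζ / (((n₀ : ℝ) - 1) * m)) :=
    mul_le_mul hA' hB' hB'pos hApos
  have hb : bDelta ε δ = (1 + ε) * δ * s := by unfold bDelta; rw [hs]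
  have hc : cDelta ε δ = -(1 - δ ^ 2) * (ε ^ 2 + 2 * ε) := rfl
  have ht3 : (1 + ε - δ * s) / m ≤ (1 + ε) / 3 := by
    rw [div_le_div_iff₀ hm0 (by norm_num)]
    nlinarith [mul_nonneg hδ0 hs0]
  have hA'le2 : (1 + ε) * (1 - 2 / m) + (1 + ε - δ * s) / m ≤ 2 := by
    have h2m0 : (0:ℝ) ≤ 2 / m := by positivity
    have e1 : (1 + ε) * (1 - 2 / m) ≤ (1 + ε) * 1 :=
      mul_le_mul_of_nonneg_left (by linarith) (by linarith)
    linarith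
  have key : ((1 + ε) * (1 - 2 / m) + (1 + ε - δ * s) / m)
      * (1 + (ε - ε ^ ν) + (1 + ε - δ * s) / m)
      - (1 + 2 * ε - 2 * ε ^ ν - 2 * ((1 + ε) * δ * s) / m
        - (1 - -(1 - δ ^ 2) * (ε ^ 2 + 2 * ε)) / m ^ 2)
      = ε ^ 2 + ε ^ ν * (2 - ((1 + ε) * (1 - 2 / m) + (1 + ε - δ * s) / m)) := by
    linear_combination (δ ^ 2 / m ^ 2) * hs2
  have hfin : 1 + 2 * ε - 2 * ε ^ ν - 2 * bDelta ε δ / m - (1 - cDelta ε δ) / m ^ 2 ≤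
      ((1 + ε) * (1 - 2 / m) + (1 + ε - δ * s) / m)
      * (1 + (ε - ε ^ ν) + (1 + ε - δ * s) / m) := by
    rw [hb, hc]
    linarith only [key, mul_nonneg hεν0 (by linarith only [hA'le2] : (0:ℝ) ≤ 2 - ((1 + ε) * (1 - 2 / m) + (1 + ε - δ * s) / m)), sq_nonneg ε]
  exact le_trans hfin hmain
end

section
/- There exist κ₀ > 0 and ε₀ > 0 such that for every ε ∈ (0, ε₀], every real a with 2ε ≤ a ≤ 2ε + κ₀·ε^{3/2}, every δ with 1 + ((2√2+3)/6)·√ε ≤ δ ≤ 1 + √ε, and every integer l ≥ 2, the following inequality holds: (1 − √a + 1/(2l−1−b_ε^{(δ)})) · (1 + √a − 1/(2l+1−b_ε^{(δ)})) · (1 + a − b_ε^{(δ)}/l − (1−c_ε^{(δ)})/(4l²)) ≤ 1. -/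
set_option maxHeartbeats 1000000

private lemma basicFacts (s r b c : ℝ) (hs0 : 0 < s) (hs : s ≤ 1/10)
    (hr0 : 0 < r) (hr2 : 2*s^2 ≤ r^2) (hru : r^2 ≤ 2*s^2 + s^3/30)
    (hbr : r + s^2 ≤ b) (hb : b ≤ 2*s)
    (hc0 : 0 ≤ c) (hc : c ≤ (31/10)*s*(b-r) + s^3/25) :
    s^2 ≤ b - r ∧ r^2 ≤ (201/100)*s^2 ∧ r ≤ (3/2)*s ∧ (7/5)*s ≤ r ∧ 0 < b ∧ b ≤ 21/100 ∧
      c ≤ (32/100)*(b-r) ∧ c ≤ 1 ∧ r^3 ≤ (311/100)*s^3 ∧ r^2*(b-r) ≤ (21/1000)*(b-r) ∧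
      r^4 ≤ (5/100)*(b-r) ∧ s^3 ≤ (1/10)*(b-r) ∧ s^2 ≤ 1/100 := by
  have hm0 : s^2 ≤ b - r := by linarith
  have hmp : 0 < b - r := lt_of_lt_of_le (by positivity) hm0
  have hs3 : s^3 ≤ (1/10)*s^2 := by
    have := mul_le_mul_of_nonneg_right hs (sq_nonneg s); nlinarith
  have hs2 : s^2 ≤ 1/100 := by nlinarith
  have hr2' : r^2 ≤ (201/100)*s^2 := by linarith
  have hr15 : r ≤ (3/2)*s := by
    have h : r^2 ≤ ((3/2)*s)^2 := by nlinarith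
    exact le_of_pow_le_pow_left₀ two_ne_zero (by positivity) h
  have hrl : (7/5)*s ≤ r := by
    have h : ((7/5)*s)^2 ≤ r^2 := by nlinarith
    exact le_of_pow_le_pow_left₀ two_ne_zero hr0.le h
  have hbp : 0 < b := by nlinarith
  have hb21 : b ≤ 21/100 := by linarith
  have hsm : s*(b-r) ≤ (1/10)*(b-r) := by nlinarith [mul_le_mul_of_nonneg_right hs hmp.le]
  have hs3m : s^3 ≤ (1/10)*(b-r) := by nlinarith
  have hcu : c ≤ (32/100)*(b-r) := by nlinarith
  have hc1 : c ≤ 1 := by nlinarith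
  have hr3 : r^3 ≤ (311/100)*s^3 := by
    have h1 : r^3 = r * r^2 := by ring
    rw [h1]
    calc r * r^2 ≤ ((3/2)*s) * r^2 := mul_le_mul_of_nonneg_right hr15 (sq_nonneg r)
      _ ≤ ((3/2)*s) * ((201/100)*s^2) := by
          apply mul_le_mul_of_nonneg_left hr2'; positivity
      _ ≤ (311/100)*s^3 := by nlinarith [pow_pos hs0 3]
  have hr2m : r^2*(b-r) ≤ (21/1000)*(b-r) := by
    have h1 : r^2 ≤ 21/1000 := by nlinarith
    exact mul_le_mul_of_nonneg_right h1 hmp.le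
  have hr4 : r^4 ≤ (5/100)*(b-r) := by
    have h1 : r^4 = r^2 * r^2 := by ring
    rw [h1]
    calc r^2*r^2 ≤ ((201/100)*s^2) * r^2 := mul_le_mul_of_nonneg_right hr2' (sq_nonneg r)
      _ ≤ ((201/100)*s^2) * ((201/100)*s^2) := by
          apply mul_le_mul_of_nonneg_left hr2'; positivity
      _ ≤ (5/100)*s^2 := by nlinarith [mul_le_mul_of_nonneg_left hs2 (sq_nonneg s)]
      _ ≤ (5/100)*(b-r) := by linarith
  exact ⟨hm0, hr2', hr15, hrl, hbp, hb21, hcu, hc1, hr3, hr2m, hr4, hs3m, hs2⟩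

private lemma pieceA (s r b : ℝ) (hmp : 0 < b - r) (hb21 : b ≤ 21/100)
    (hr3 : r^3 ≤ (311/100)*s^3) (hr2m : r^2*(b-r) ≤ (21/1000)*(b-r))
    (hr4 : r^4 ≤ (5/100)*(b-r)) (hs3m : s^3 ≤ (1/10)*(b-r)) (hr0 : 0 < r) :
    (13/20)*(b-r) ≤ 2*(b-r) - 2*r^3 - 2*r^2*b - 2*r^4*b := by
  have e : r^2*b = r^3 + r^2*(b-r) := by ring
  have h4b : r^4*b ≤ (21/100)*((5/100)*(b-r)) := by
    calc r^4*b ≤ r^4*(21/100) := by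
          apply mul_le_mul_of_nonneg_left hb21; positivity
      _ = (21/100)*r^4 := by ring
      _ ≤ (21/100)*((5/100)*(b-r)) := by linarith
  nlinarith [hr3, hr2m, hs3m]

private lemma pieceB (s r b c : ℝ) (hmp : 0 < b - r) (hr0 : 0 < r) (hbp : 0 < b)
    (hrl : (7/5)*s ≤ r) (hb : b ≤ 2*s) (hs : s ≤ 1/10) (hr15 : r ≤ (3/2)*s)
    (hr4 : r^4 ≤ (5/100)*(b-r)) (hc0 : 0 ≤ c) (hcu : c ≤ (32/100)*(b-r)) :
    -((91/100)*(b-r)) ≤ -2*(2*b-r)*(b-r) + 4*r^2*b^2 + r^4*b^2 + 2*r^3*b - r^4 - c*(1-r^2) := by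
  have h2 : (2*b-r)*(b-r) ≤ (27/100)*(b-r) := by
    have h2a : 2*b - r ≤ 27/100 := by linarith
    exact mul_le_mul_of_nonneg_right h2a hmp.le
  have h3 : 0 ≤ 4*r^2*b^2 + r^4*b^2 + 2*r^3*b := by positivity
  have h4 : c*(1-r^2) ≤ c := by nlinarith [mul_nonneg hc0 (sq_nonneg r)]
  nlinarith

private lemma pieceC (s r b c : ℝ) (hmp : 0 < b - r) (hr0 : 0 < r) (hbp : 0 < b)
    (hb21 : b ≤ 21/100) (hm0 : s^2 ≤ b - r)
    (hr2' : r^2 ≤ (201/100)*s^2) (hc0 : 0 ≤ c) :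
    -(2*(b-r)) ≤ -2*(b-r) + 2*b*(b-r)^2 + 2*r^2*b*(1-b^2) + 2*c*((b-r) - r^2*b) := by
  have h1 : 0 ≤ 2*b*(b-r)^2 := by positivity
  have hb2 : b^2 ≤ 1 := by nlinarith
  have h2 : 0 ≤ 2*r^2*b*(1-b^2) := by
    have : 0 ≤ r^2*b := by positivity
    nlinarith
  have h3 : 0 ≤ (b-r) - r^2*b := by
    have h3a : r^2*b ≤ s^2 := by
      calc r^2*b ≤ r^2*(21/100) := by apply mul_le_mul_of_nonneg_left hb21; positivity
        _ = (21/100)*r^2 := by ring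
        _ ≤ (21/100)*((201/100)*s^2) := by linarith
        _ ≤ s^2 := by nlinarith [sq_nonneg s]
    linarith
  nlinarith [mul_nonneg hc0 h3]

private lemma pieceD (s r b c : ℝ) (hmp : 0 < b - r) (hm0 : s^2 ≤ b - r) (hbp : 0 < b)
    (hb21 : b ≤ 21/100) (hr2' : r^2 ≤ (201/100)*s^2) (hc0 : 0 ≤ c) (hc1 : c ≤ 1) :
    -((9/100)*(b-r)) ≤ (1-c)*((b-r)^2 - r^2*b^2) := by
  have h1 : r^2*b^2 ≤ (9/100)*(b-r) := by
    have hbb : b^2 ≤ (21/100)^2 := by nlinarith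
    calc r^2*b^2 ≤ r^2*(21/100)^2 := by apply mul_le_mul_of_nonneg_left hbb; positivity
      _ = (21/100)^2*r^2 := by ring
      _ ≤ (21/100)^2*((201/100)*s^2) := by linarith
      _ ≤ (9/100)*s^2 := by nlinarith [sq_nonneg s]
      _ ≤ (9/100)*(b-r) := by linarith
  nlinarith [mul_nonneg hc0 (sq_nonneg (b-r)),
    mul_nonneg hc0 (mul_nonneg (sq_nonneg r) (sq_nonneg b)), sq_nonneg (b-r)]

private lemma keyG (s r b c x : ℝ) (hs0 : 0 < s) (hs : s ≤ 1/10)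
    (hr0 : 0 < r) (hr2 : 2*s^2 ≤ r^2) (hru : r^2 ≤ 2*s^2 + s^3/30)
    (hbr : r + s^2 ≤ b) (hb : b ≤ 2*s)
    (hc0 : 0 ≤ c) (hc : c ≤ (31/10)*s*(b-r) + s^3/25)
    (hx : 4 ≤ x) :
    0 ≤ ((x-b)^2-1)*x^2
      - ((1-r^2)*((x-b)^2-1) + 1 + 2*r*(x-b)) * ((1+r^2)*x^2 - 2*b*x - (1-c)) := by
  obtain ⟨hm0, hr2', hr15, hrl, hbp, hb21, hcu, hc1, hr3, hr2m, hr4, hs3m, hs2⟩ :=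
    basicFacts s r b c hs0 hs hr0 hr2 hru hbr hb hc0 hc
  have hmp : 0 < b - r := lt_of_lt_of_le (by positivity) hm0
  have hA := pieceA s r b hmp hb21 hr3 hr2m hr4 hs3m hr0
  have hB := pieceB s r b c hmp hr0 hbp hrl hb hs hr15 hr4 hc0 hcu
  have hC := pieceC s r b c hmp hr0 hbp hb21 hm0 hr2' hc0
  have hD := pieceD s r b c hmp hm0 hbp hb21 hr2' hc0 hc1
  have hx0 : (0:ℝ) < x := by linarith
  have hx3 : (0:ℝ) ≤ x^3 := by positivity
  have hA' : (13/20)*(b-r)*x^3 ≤ (2*(b-r) - 2*r^3 - 2*r^2*b - 2*r^4*b)*x^3 :=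
    mul_le_mul_of_nonneg_right hA hx3
  have hB' : -((91/100)*(b-r))*x^2 ≤ (-2*(2*b-r)*(b-r) + 4*r^2*b^2 + r^4*b^2 + 2*r^3*b - r^4 - c*(1-r^2))*x^2 :=
    mul_le_mul_of_nonneg_right hB (sq_nonneg x)
  have hC' : -(2*(b-r))*x ≤ (-2*(b-r) + 2*b*(b-r)^2 + 2*r^2*b*(1-b^2) + 2*c*((b-r) - r^2*b))*x :=
    mul_le_mul_of_nonneg_right hC hx0.le
  have hfin : 0 ≤ (b-r)*((13/20)*x^3 - (91/100)*x^2 - 2*x - 9/100) := by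
    apply mul_nonneg hmp.le
    nlinarith [mul_nonneg (sq_nonneg (x-4)) hx0.le, sq_nonneg (x-4)]
  have hr4x : 0 ≤ r^4*x^4 := by positivity
  have hiden : ((x-b)^2-1)*x^2
      - ((1-r^2)*((x-b)^2-1) + 1 + 2*r*(x-b)) * ((1+r^2)*x^2 - 2*b*x - (1-c))
      = r^4*x^4 + (2*(b-r) - 2*r^3 - 2*r^2*b - 2*r^4*b)*x^3
        + (-2*(2*b-r)*(b-r) + 4*r^2*b^2 + r^4*b^2 + 2*r^3*b - r^4 - c*(1-r^2))*x^2
        + (-2*(b-r) + 2*b*(b-r)^2 + 2*r^2*b*(1-b^2) + 2*c*((b-r) - r^2*b))*x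
        + (1-c)*((b-r)^2 - r^2*b^2) := by ring
  rw [hiden]
  linarith [hA', hB', hC', hD, hfin, hr4x]


private lemma keyFrac (s r b c a : ℝ) (l : ℕ) (hl : 2 ≤ l)
    (hs0 : 0 < s) (hs : s ≤ 1/10) (ha : a = r^2)
    (hr0 : 0 < r) (hr2 : 2*s^2 ≤ r^2) (hru : r^2 ≤ 2*s^2 + s^3/30)
    (hbr : r + s^2 ≤ b) (hb : b ≤ 2*s)
    (hc0 : 0 ≤ c) (hc : c ≤ (31/10)*s*(b-r) + s^3/25) :
    (1 - r + 1/(2*(l:ℝ) - 1 - b)) * (1 + r - 1/(2*(l:ℝ) + 1 - b))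
      * (1 + a - b/(l:ℝ) - (1-c)/(4*(l:ℝ)^2)) ≤ 1 := by
  have hl4 : (4:ℝ) ≤ 2*(l:ℝ) := by
    have : (2:ℝ) ≤ (l:ℝ) := by exact_mod_cast hl
    linarith
  have hl0 : (0:ℝ) < (l:ℝ) := by linarith
  have hb0 : 0 < b := by nlinarith
  have hb' : b ≤ 1/5 := by linarith
  have hd1 : 0 < 2*(l:ℝ) - 1 - b := by linarith
  have hd2 : 0 < 2*(l:ℝ) + 1 - b := by linarith
  have hG := keyG s r b c (2*(l:ℝ)) hs0 hs hr0 hr2 hru hbr hb hc0 hc hl4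
  rw [← sub_nonneg]
  have e : 1 - (1 - r + 1/(2*(l:ℝ) - 1 - b)) * (1 + r - 1/(2*(l:ℝ) + 1 - b))
      * (1 + a - b/(l:ℝ) - (1-c)/(4*(l:ℝ)^2))
      = (((2*(l:ℝ)-b)^2-1)*(2*(l:ℝ))^2
        - ((1-r^2)*((2*(l:ℝ)-b)^2-1) + 1 + 2*r*(2*(l:ℝ)-b))
          * ((1+r^2)*(2*(l:ℝ))^2 - 2*b*(2*(l:ℝ)) - (1-c)))
        / ((2*(l:ℝ) - 1 - b) * (2*(l:ℝ) + 1 - b) * (4*(l:ℝ)^2)) := by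
    rw [ha]
    field_simp
    ring
  rw [e]
  apply div_nonneg hG
  positivity


private lemma hb2s_lem (s ε δ u : ℝ) (hs0 : 0 < s) (hε : 0 ≤ ε) (hεu : ε ≤ 1/100)
    (hδ1 : 1 ≤ δ) (hδu : δ ≤ 11/10) (hu0 : 0 ≤ u) (huu : u ≤ (142/100)*s) :
    (1+ε)*δ*u ≤ (8/5)*s := by
  have hp : (1+ε)*δ ≤ (101/100)*(11/10) := by nlinarith
  have hp0 : 0 ≤ (1+ε)*δ := by nlinarith
  calc (1+ε)*δ*u ≤ ((101/100)*(11/10))*u := mul_le_mul_of_nonneg_right hp hu0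
    _ ≤ ((101/100)*(11/10))*((142/100)*s) := by
        apply mul_le_mul_of_nonneg_left huu; norm_num
    _ ≤ (8/5)*s := by nlinarith

private lemma hbsq_lem (s q b : ℝ) (hs0 : 0 < s) (hs : s ≤ 1/10) (hq2 : q^2 = 2)
    (hq0 : 0 ≤ q) (h1 : (1 + (97/100)*s)*(q*s) ≤ b) :
    2*s^2 + (38/10)*s^3 ≤ b^2 := by
  have hsq1 : ((1 + (97/100)*s)*(q*s))^2 ≤ b^2 := by
    apply pow_le_pow_left₀ (by positivity) h1
  have e : ((1 + (97/100)*s)*(q*s))^2 = (q^2)*(s^2)*(1 + (97/100)*s)^2 := by ring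
  rw [e, hq2] at hsq1
  nlinarith [mul_nonneg hs0.le (sq_nonneg s), sq_nonneg s,
    mul_nonneg (mul_nonneg hs0.le hs0.le) (sq_nonneg s)]

private lemma key_lem (s b a : ℝ) (hs0 : 0 < s) (hs : s ≤ 1/10)
    (hbsq : 2*s^2 + (38/10)*s^3 ≤ b^2) (hb2s : b ≤ (8/5)*s) (hb0 : 0 < b)
    (ha : a ≤ 2*s^2 + s^3/30) : a ≤ (b - s^2)^2 ∧ 0 ≤ b - s^2 := by
  have hbs2 : 0 ≤ b - s^2 := by nlinarith
  constructor
  · have e : (b - s^2)^2 = b^2 - 2*b*s^2 + s^4 := by ring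
    have h2 : 2*b*s^2 ≤ 2*((8/5)*s)*s^2 := by nlinarith [sq_nonneg s]
    nlinarith [sq_nonneg (s^2)]
  · exact hbs2

private lemma hrub_lem (s q r : ℝ) (hs0 : 0 < s) (hq2 : q^2 = 2) (h2a : (1414/1000:ℝ) ≤ q)
    (hr0 : 0 < r) (hru : r^2 ≤ 2*s^2 + s^3/30) : r ≤ q*s + s^2/80 := by
  have h : r^2 ≤ (q*s + s^2/80)^2 := by
    have e : (q*s + s^2/80)^2 = q^2*s^2 + q*s^3/40 + s^4/6400 := by ring
    rw [e, hq2]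
    nlinarith [sq_nonneg (s^2), mul_nonneg (mul_nonneg hs0.le hs0.le) hs0.le]
  exact le_of_pow_le_pow_left₀ two_ne_zero (by positivity) h

private lemma hcub_lem (s ε δ : ℝ) (hs0 : 0 < s) (hsq : s^2 = ε) (hεu : ε ≤ 1/100)
    (hδ1 : 1 ≤ δ) (hδu : δ ≤ 11/10) :
    (δ^2 - 1)*(ε^2 + 2*ε) ≤ (4221/1000)*(δ-1)*s^2 := by
  have h1 : ε^2 + 2*ε ≤ (201/100)*s^2 := by nlinarith
  have h3 : 0 ≤ δ - 1 := by linarith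
  have he : 0 ≤ ε := hsq ▸ sq_nonneg s
  have he2 : 0 ≤ ε^2 + 2*ε := by positivity
  nlinarith [mul_nonneg h3 (sq_nonneg s), mul_nonneg h3 he2]

private lemma hcc_lem (s q δ b r c : ℝ) (hs0 : 0 < s) (hq2 : q^2 = 2)
    (h2a : (1414/1000:ℝ) ≤ q) (hδ1 : 1 ≤ δ)
    (hbl : δ*(q*s) ≤ b) (hrub : r ≤ q*s + s^2/80)
    (hcub : c ≤ (4221/1000)*(δ-1)*s^2) :
    c ≤ (31/10)*s*(b-r) + s^3/25 := by
  have hbrl : q*(δ-1)*s - s^2/80 ≤ b - r := by nlinarith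
  have h5 : (31/10)*s*(q*(δ-1)*s - s^2/80) ≤ (31/10)*s*(b-r) := by
    apply mul_le_mul_of_nonneg_left hbrl; positivity
  have h7 : 0 ≤ δ - 1 := by linarith
  have h6 : (4221/1000)*(δ-1)*s^2 ≤ (31/10)*s*(q*(δ-1)*s - s^2/80) + s^3/25 := by
    nlinarith [mul_nonneg (mul_nonneg h7 (mul_nonneg hs0.le hs0.le)) (sub_nonneg.2 h2a),
      mul_nonneg hs0.le (sq_nonneg s)]
  linarith

theorem stmt4 :
    ∃ κ₀ > (0:ℝ), ∃ ε₀ > (0:ℝ), ∀ ε : ℝ, 0 < ε → ε ≤ ε₀ →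
      ∀ a : ℝ, 2 * ε ≤ a → a ≤ 2 * ε + κ₀ * ε ^ ((3:ℝ)/2) →
      ∀ δ : ℝ, 1 + ((2 * Real.sqrt 2 + 3) / 6) * Real.sqrt ε ≤ δ → δ ≤ 1 + Real.sqrt ε →
      ∀ l : ℕ, 2 ≤ l →
      (1 - Real.sqrt a + 1 / (2 * (l : ℝ) - 1 - bDelta ε δ))
        * (1 + Real.sqrt a - 1 / (2 * (l : ℝ) + 1 - bDelta ε δ))
        * (1 + a - bDelta ε δ / (l : ℝ) - (1 - cDelta ε δ) / (4 * (l : ℝ) ^ 2))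
      ≤ 1 := by
  refine ⟨1/30, by norm_num, 1/100, by norm_num, ?_⟩
  intro ε hε hε0 a ha1 ha2 δ hδ1 hδ2 l hl
  have hεu : ε ≤ 1/100 := hε0
  set s := Real.sqrt ε with hsdef
  have hs0 : 0 < s := Real.sqrt_pos.2 hε
  have hsq : s^2 = ε := Real.sq_sqrt hε.le
  have hs : s ≤ 1/10 := by
    have h : s^2 ≤ (1/10:ℝ)^2 := by rw [hsq]; norm_num; linarith
    exact le_of_pow_le_pow_left₀ two_ne_zero (by norm_num) h
  have hε32 : ε ^ ((3:ℝ)/2) = s^3 := by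
    rw [hsdef, Real.sqrt_eq_rpow, ← Real.rpow_natCast (ε ^ ((1:ℝ)/2)) 3,
      ← Real.rpow_mul hε.le]
    norm_num
  have ha0 : 0 < a := by linarith
  set r := Real.sqrt a with hrdef
  have hr0 : 0 < r := Real.sqrt_pos.2 ha0
  have hra : r^2 = a := Real.sq_sqrt ha0.le
  have hr2 : 2*s^2 ≤ r^2 := by rw [hra, hsq]; linarith
  have hru : r^2 ≤ 2*s^2 + s^3/30 := by
    rw [hra, hsq]
    calc a ≤ 2*ε + (1/30) * ε ^ ((3:ℝ)/2) := ha2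
      _ = 2*ε + s^3/30 := by rw [hε32]; ring
  -- facts about sqrt 2
  set q := Real.sqrt 2 with hqdef
  have hq2 : q^2 = 2 := Real.sq_sqrt (by norm_num)
  have hq0 : 0 ≤ q := Real.sqrt_nonneg 2
  have h2a : (1414/1000 : ℝ) ≤ q := by
    have h : ((1414/1000:ℝ))^2 ≤ q^2 := by rw [hq2]; norm_num
    exact le_of_pow_le_pow_left₀ two_ne_zero hq0 h
  have h2b : q ≤ (1415/1000 : ℝ) := by
    have h : q^2 ≤ ((1415/1000:ℝ))^2 := by rw [hq2]; norm_num
    exact le_of_pow_le_pow_left₀ two_ne_zero (by norm_num) h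
  -- u = sqrt(ε² + 2ε)
  set u := Real.sqrt (ε^2 + 2*ε) with hudef
  have hu0 : 0 ≤ u := Real.sqrt_nonneg _
  have huq : u^2 = ε^2 + 2*ε := Real.sq_sqrt (by positivity)
  have hul : q*s ≤ u := by
    have h : (q*s)^2 ≤ u^2 := by
      rw [huq]; have : (q*s)^2 = q^2*s^2 := by ring
      rw [this, hq2]; linarith [sq_nonneg ε, hsq]
    exact le_of_pow_le_pow_left₀ two_ne_zero hu0 h
  have huu : u ≤ (142/100)*s := by
    have h : u^2 ≤ ((142/100)*s)^2 := by
      rw [huq]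
      have hε2 : ε*ε ≤ ε*(1/100) := mul_le_mul_of_nonneg_left hεu hε.le
      have e2 : ((142/100)*s)^2 = (20164/10000)*s^2 := by ring
      rw [e2, hsq]; linarith [hε2]
    exact le_of_pow_le_pow_left₀ two_ne_zero (by positivity) h
  -- δ bounds
  have hδl : 1 + (97/100)*s ≤ δ := by
    have hc1 : (97/100 : ℝ) ≤ (2*q + 3)/6 := by linarith
    have := mul_le_mul_of_nonneg_right hc1 hs0.le
    linarith
  have hδu : δ ≤ 11/10 := by linarith
  have hδ1' : (1:ℝ) ≤ δ := by
    have h0 : (0:ℝ) ≤ (2*q + 3)/6 := by linarith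
    have := mul_nonneg h0 hs0.le
    linarith
  -- b bounds
  set b := bDelta ε δ with hbdef
  have hbeq : b = (1+ε)*δ*u := rfl

  have hb2s : b ≤ (8/5)*s := by
    rw [hbeq]
    exact hb2s_lem s ε δ u hs0 hε.le hεu hδ1' hδu hu0 huu
  have hb : b ≤ 2*s := by linarith
  have hbl : δ*(q*s) ≤ b := by
    rw [hbeq]
    have h1 : δ*(q*s) ≤ δ*u := by
      apply mul_le_mul_of_nonneg_left hul; linarith
    have h2 : δ*u ≤ (1+ε)*δ*u := by
      have h3 : 0 ≤ ε*(δ*u) := by positivity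
      linarith [h3]
    linarith
  have h1qs : (1 + (97/100)*s)*(q*s) ≤ b := by
    calc (1 + (97/100)*s)*(q*s) ≤ δ*(q*s) := by
          apply mul_le_mul_of_nonneg_right hδl; positivity
      _ ≤ b := hbl
  have hb0 : 0 < b := by
    have hq02 : (0:ℝ) < q := by linarith
    have := mul_pos (mul_pos (show (0:ℝ) < δ by linarith) hq02) hs0
    linarith [hbl, this]
  have hbsq := hbsq_lem s q b hs0 hs hq2 hq0 h1qs
  have hrle : a ≤ 2*s^2 + s^3/30 := by rw [← hra]; exact hru
  obtain ⟨hkey, hbs2⟩ := key_lem s b a hs0 hs hbsq hb2s hb0 hrle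
  have hbr : r + s^2 ≤ b := by
    have hrb : r ≤ b - s^2 := by
      rw [hrdef]
      calc Real.sqrt a ≤ Real.sqrt ((b-s^2)^2) := Real.sqrt_le_sqrt hkey
        _ = b - s^2 := Real.sqrt_sq hbs2
    linarith
  -- c bounds
  set c := cDelta ε δ with hcdef
  have hceq : c = (δ^2 - 1)*(ε^2 + 2*ε) := by rw [hcdef, cDelta]; ring
  have hc0 : 0 ≤ c := by
    rw [hceq]
    apply mul_nonneg
    · have h0 : 0 ≤ (δ-1)*(δ+1) := mul_nonneg (by linarith) (by linarith)
      linarith [h0]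
    · positivity
  have hcc : c ≤ (31/10)*s*(b-r) + s^3/25 := by
    have hrub := hrub_lem s q r hs0 hq2 h2a hr0 hru
    have hcub : c ≤ (4221/1000)*(δ-1)*s^2 := by
      rw [hceq]; exact hcub_lem s ε δ hs0 hsq hεu hδ1' hδu
    exact hcc_lem s q δ b r c hs0 hq2 h2a hδ1' hbl hrub hcub
  -- apply the main lemma
  have := keyFrac s r b c a l hl hs0 hs hra.symm hr0 hr2 hru hbr hb hc0 hcc
  exact this
end

section
/- Fix 0 < γ < 1. There exist C_γ > 0 and ε₀ > 0 such that: for every ε ∈ (0, ε₀], every φ > 0, every even integer N with N^{−γ} ≤ 1/2 and N − N^{1−γ} ≥ 2, every even integer i with N − N^{1−γ} ≤ i ≤ N−2, every δ with 1 + ((2√2+3)/6)·√ε ≤ δ ≤ 1 + √ε, and z := E + (δ−1)·φ·√(ε²+2ε), one has 𝒲(i, z) ≥ 1/(4·[1 + a − 2b_ε^{(δ)}/(N−i+2) − (1−c_ε^{(δ)})/(N−i+2)²]), where a := 2ε + C_γ·(ε/N^γ + 1/N + ε²). -/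
set_option maxHeartbeats 1000000 in
lemma key_ineq (x m e t A1 A2 : ℝ) (hx : 2 ≤ x) (hm : 2 ≤ m) (hmx : m ≤ x)
    (he0 : 0 < e) (he : e ≤ 1/100) (ht0 : 0 ≤ t) (ht : t ≤ 1/2) (ht2 : t^2 ≤ 12*e)
    (hA10 : 0 ≤ A1) (hA1 : e*m ≤ A1*(x+m)) (hA2 : A2*(x+m) = 1) :
    (x*m + (x+m)*(e*m+(1+e-t))) * ((x-2)*(m+2) + (x+m)*(e*(m+2)+(1+e-t)))
      ≤ (x-1)*x*((m+2)^2*(1+(2*e+400*(A1+A2+e^2))) - 2*((1+e)*t)*(m+2) + (t^2-(e^2+2*e)) - 1) := by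
  have hm0 : (0:ℝ) ≤ m := by linarith
  have hx0 : (0:ℝ) ≤ x := by linarith
  have he' : (0:ℝ) ≤ e := he0.le
  have he2 : e*e ≤ (1/100)*e := mul_le_mul_of_nonneg_right he he'
  have hQ1 : -((m+2)^2 + 12*e + 8*e*m*(m+2)^2)
      ≤ 1 - t^2 + 6*e + 4*e*t + e^2 - 2*m + 6*m*t - 2*m*t^2 - 4*m*e + 10*m*e*t - 6*m*e^2
        - m^2 + 2*m^2*t - 8*m^2*e + 4*m^2*e*t - 8*m^2*e^2 - 2*m^3*e - 2*m^3*e^2 := by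
    linarith [mul_le_mul_of_nonneg_left ht2 (by linarith : (0:ℝ) ≤ 1+2*m),
      mul_le_mul_of_nonneg_left he2 (by nlinarith : (0:ℝ) ≤ 6*m+8*m^2+2*m^3),
      mul_nonneg he' ht0, mul_nonneg hm0 ht0, mul_nonneg (mul_nonneg hm0 he') ht0,
      mul_nonneg (mul_nonneg (mul_nonneg hm0 hm0) he') ht0,
      mul_nonneg (mul_nonneg hm0 hm0) ht0,
      mul_nonneg he' hm0, mul_nonneg (mul_nonneg he' hm0) hm0,
      mul_nonneg (mul_nonneg (mul_nonneg he' hm0) hm0) hm0, sq_nonneg e]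
  have hxQ1 := mul_le_mul_of_nonneg_left hQ1 hx0
  have hQ0 : -(2*m + 4*e*m*(m+2)^2 + e*x*m*(m+2)^2)
      ≤ 4*m - 4*m*t + 4*m*e + m^2 - m^2*t^2 + 2*m^2*e + 4*m^2*e*t - 3*m^2*e^2
        + 2*m^3*e*t - 4*m^3*e^2 - m^4*e^2 := by
    linarith [mul_le_mul_of_nonneg_left ht (by linarith : (0:ℝ) ≤ 4*m),
      mul_le_mul_of_nonneg_left ht2 (mul_nonneg hm0 hm0),
      mul_le_mul_of_nonneg_left he2 (by positivity : (0:ℝ) ≤ 3*m^2+4*m^3),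
      mul_le_mul_of_nonneg_left (mul_le_mul_of_nonneg_left he2 (by positivity : (0:ℝ) ≤ m^3)) hx0,
      mul_le_mul_of_nonneg_right hmx (by positivity : (0:ℝ) ≤ m^3*e^2),
      mul_nonneg (mul_nonneg hm0 he') ht0,
      mul_nonneg (mul_nonneg (mul_nonneg hm0 hm0) he') ht0,
      mul_nonneg (mul_nonneg (mul_nonneg (mul_nonneg hm0 hm0) hm0) he') ht0,
      mul_nonneg (mul_nonneg he' hx0) hm0,
      mul_nonneg (mul_nonneg (mul_nonneg he' hx0) hm0) hm0,
      mul_nonneg he' hm0, mul_nonneg (mul_nonneg he' hm0) hm0, sq_nonneg m,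
      mul_nonneg (mul_nonneg (mul_nonneg he' hm0) hm0) hm0,
      mul_nonneg (mul_nonneg (mul_nonneg (mul_nonneg he' hx0) hm0) hm0) hm0]
  have hxm0 : (0:ℝ) < x + m := by linarith
  have hA20 : 0 < A2 := by
    by_contra h
    push_neg at h
    nlinarith [hA2]
  have h2 : (x+m)/4*(x*(m+2)^2) ≤ (x-1)*(x*(m+2)^2) :=
    mul_le_mul_of_nonneg_right (by linarith : (x+m)/4 ≤ x-1) (by positivity)
  have hP2a := mul_le_mul_of_nonneg_left h2 hA20.le
  have hP2b : A2*((x+m)/4*(x*(m+2)^2)) = x*(m+2)^2/4 := by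
    linear_combination (x*(m+2)^2/4) * hA2
  have hP3a := mul_le_mul_of_nonneg_left h2 hA10
  have hP3b : e*m*(x*(m+2)^2/4) ≤ A1*(x+m)*(x*(m+2)^2/4) :=
    mul_le_mul_of_nonneg_right hA1 (by positivity)
  have hP1 : e^2*(x^2*(m+2)^2) ≤ 400*(e^2*((x-1)*(x*(m+2)^2))) := by
    nlinarith [mul_le_mul_of_nonneg_left
      (mul_le_mul_of_nonneg_right (show x/2 ≤ x-1 by linarith)
        (show (0:ℝ) ≤ x*(m+2)^2 by positivity)) (sq_nonneg e),
      mul_nonneg (sq_nonneg e) (mul_nonneg (mul_nonneg hx0 hx0) (sq_nonneg (m+2)))]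
  have hE1 : e*(x*(m+2)^2) ≤ (1/100)*(x*(m+2)^2) :=
    mul_le_mul_of_nonneg_right he (by positivity)
  have hE2 : e*x ≤ (1/100)*x := mul_le_mul_of_nonneg_right he hx0
  have hE3 : x*16 ≤ x*(m+2)^2 :=
    mul_le_mul_of_nonneg_left (by nlinarith : (16:ℝ) ≤ (m+2)^2) hx0
  have hE4 : e*m*(m+2)^2*2 ≤ e*m*(m+2)^2*x :=
    mul_le_mul_of_nonneg_left hx (by positivity)
  linarith [hxQ1, hQ0, hP1, hP2a, hP2b, hP3a, hP3b, hE1, hE2, hE3, hE4, hmx,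
    mul_nonneg hx0 (sq_nonneg (m+2)),
    mul_nonneg (mul_nonneg (mul_nonneg he' hm0) hx0) (sq_nonneg (m+2))]

/-- The Bogoliubov ground-state energy `E^Bog := −φ·(ε+1−√(ε²+2ε))` of the three-modes system. -/
noncomputable def EBog (ε φ : ℝ) : ℝ := -(φ * (ε + 1 - Real.sqrt (ε ^ 2 + 2 * ε)))

/-- The scalar value `𝒲(i,z)` of `W_{j*;i,i−2} R^Bog_{i−2,i−2}(z) W*_{j*;i−2,i}`. -/
noncomputable def Wcal (ε φ : ℝ) (N i : ℕ) (z : ℝ) : ℝ :=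
  ((i : ℝ) - 1) * (i : ℝ) * φ ^ 2 * (((N : ℝ) - (i : ℝ)) / 2 + 1) ^ 2 /
    ((N : ℝ) ^ 2 * (((i : ℝ) / (N : ℝ) * φ + ε * φ) * ((N : ℝ) - (i : ℝ)) - z)
      * ((((i : ℝ) - 2) / (N : ℝ) * φ + ε * φ) * ((N : ℝ) - (i : ℝ) + 2) - z))

set_option maxHeartbeats 1000000 in
theorem stmt5 (γ : ℝ) (hγ0 : 0 < γ) (hγ1 : γ < 1) :
    ∃ Cγ > (0:ℝ), ∃ ε₀ > (0:ℝ), ∀ ε : ℝ, 0 < ε → ε ≤ ε₀ →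
      ∀ φ : ℝ, 0 < φ →
      ∀ N : ℕ, Even N → (N : ℝ) ^ (-γ) ≤ 1/2 → 2 ≤ (N : ℝ) - (N : ℝ) ^ (1 - γ) →
      ∀ i : ℕ, Even i → (N : ℝ) - (N : ℝ) ^ (1 - γ) ≤ (i : ℝ) → i + 2 ≤ N →
      ∀ δ : ℝ, 1 + ((2 * Real.sqrt 2 + 3) / 6) * Real.sqrt ε ≤ δ → δ ≤ 1 + Real.sqrt ε →
      ∀ z a : ℝ,
        z = EBog ε φ + (δ - 1) * φ * Real.sqrt (ε ^ 2 + 2 * ε) →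
        a = 2 * ε + Cγ * (ε / (N : ℝ) ^ γ + 1 / (N : ℝ) + ε ^ 2) →
      Wcal ε φ N i z ≥
        1 / (4 * (1 + a - 2 * bDelta ε δ / ((N : ℝ) - (i : ℝ) + 2)
          - (1 - cDelta ε δ) / ((N : ℝ) - (i : ℝ) + 2) ^ 2)) := by
  refine ⟨400, by norm_num, 1/100, by norm_num, ?_⟩
  intro ε hε0 hε φ hφ N hNe hNg hN2 i hie hilo hiN δ hδlo hδhi z a hz ha
  have hiNr : (i:ℝ) + 2 ≤ (N:ℝ) := by exact_mod_cast hiN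
  set s := Real.sqrt (ε^2+2*ε) with hs_def
  set X := (i:ℝ) with hX_def
  set M := (N:ℝ) - X with hM_def
  set t := δ * s with ht_def
  clear_value s X M t
  have hs0 : 0 ≤ s := by rw [hs_def]; exact Real.sqrt_nonneg _
  have hs2 : s^2 = ε^2+2*ε := by
    rw [hs_def]; exact Real.sq_sqrt (by nlinarith only [hε0, sq_nonneg ε])
  have hsle : s ≤ 1/4 := by nlinarith only [sq_nonneg (s - 1/4), hs2, hε0, hε, hs0]
  have hδ1 : 1 ≤ δ := by
    have h1 : 0 ≤ ((2 * Real.sqrt 2 + 3) / 6) * Real.sqrt ε :=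
      mul_nonneg (by positivity) (Real.sqrt_nonneg ε)
    linarith
  have hδ2 : δ ≤ 2 := by
    have h1 : Real.sqrt ε ≤ 1 := by
      rw [show (1:ℝ) = Real.sqrt 1 by simp]
      exact Real.sqrt_le_sqrt (by linarith)
    linarith
  have ht0 : 0 ≤ t := by rw [ht_def]; exact mul_nonneg (by linarith) hs0
  have ht12 : t ≤ 1/2 := by
    rw [ht_def]
    calc δ * s ≤ 2 * (1/4) := mul_le_mul hδ2 hsle hs0 (by norm_num)
    _ = 1/2 := by norm_num
  have htsq : t^2 = δ^2*(ε^2+2*ε) := by rw [ht_def, mul_pow, hs2]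
  have ht2 : t^2 ≤ 12*ε := by
    have hδsq : δ^2 ≤ 4 := by nlinarith only [hδ1, hδ2]
    have hεq : ε^2+2*ε ≤ 3*ε := by nlinarith only [hε0, hε]
    have h0 : (0:ℝ) ≤ ε^2+2*ε := by nlinarith only [hε0, sq_nonneg ε]
    calc t^2 = δ^2*(ε^2+2*ε) := htsq
    _ ≤ 4*(3*ε) := mul_le_mul hδsq hεq h0 (by norm_num)
    _ = 12*ε := by ring
  have hX2 : 2 ≤ X := by linarith
  have hM2 : 2 ≤ M := by rw [hM_def]; linarith
  have hN0 : (0:ℝ) < (N:ℝ) := by linarith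
  have hNγ0 : (0:ℝ) < (N:ℝ)^γ := Real.rpow_pos_of_pos hN0 γ
  have hNmono : (N:ℝ)^(1-γ) * (N:ℝ)^γ = (N:ℝ) := by
    rw [← Real.rpow_add hN0, show (1-γ)+γ = 1 by ring, Real.rpow_one]
  have hNsplit : (N:ℝ)^(1-γ) = (N:ℝ) * (N:ℝ)^(-γ) := by
    rw [show (1:ℝ)-γ = 1 + (-γ) by ring, Real.rpow_add hN0, Real.rpow_one]
  have hMle : M ≤ (N:ℝ)^(1-γ) := by rw [hM_def]; linarith
  have hMhalf : M ≤ (N:ℝ)/2 := by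
    have h1 : (N:ℝ) * (N:ℝ)^(-γ) ≤ (N:ℝ) * (1/2) := mul_le_mul_of_nonneg_left hNg hN0.le
    linarith only [hNsplit, hMle, h1]
  have hMX : M ≤ X := by linarith [hM_def]
  have hA10 : 0 ≤ ε/(N:ℝ)^γ := by positivity
  have hXM : X + M = (N:ℝ) := by rw [hM_def]; ring
  have hA1 : ε*M ≤ (ε/(N:ℝ)^γ)*(X+M) := by
    rw [hXM, div_mul_eq_mul_div, le_div_iff₀ hNγ0]
    have h1 : M*(N:ℝ)^γ ≤ (N:ℝ) := by
      calc M*(N:ℝ)^γ ≤ (N:ℝ)^(1-γ)*(N:ℝ)^γ := mul_le_mul_of_nonneg_right hMle hNγ0.le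
      _ = (N:ℝ) := hNmono
    calc ε*M*(N:ℝ)^γ = ε*(M*(N:ℝ)^γ) := by ring
    _ ≤ ε*(N:ℝ) := mul_le_mul_of_nonneg_left h1 hε0.le
  have hA2 : (1/(N:ℝ))*(X+M) = 1 := by rw [hXM]; field_simp
  have hz'' : z = φ*(t - (1+ε)) := by
    rw [hz]; simp only [EBog]; rw [← hs_def, ht_def]; ring
  have hb : bDelta ε δ = (1+ε)*t := by
    simp only [bDelta]; rw [← hs_def, ht_def]; ring
  have hc : cDelta ε δ = t^2 - (ε^2+2*ε) := by
    simp only [cDelta]; rw [htsq]; ring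
  have hM2pos : (0:ℝ) < M + 2 := by linarith
  have h16 : (16:ℝ) ≤ (M+2)^2 := by nlinarith only [hM2, sq_nonneg (M-2)]
  have ha0 : 0 ≤ a := by
    rw [ha]
    have h2 : (0:ℝ) ≤ 1/(N:ℝ) := by positivity
    linarith only [sq_nonneg ε, hA10, h2, hε0]
  have hKb : 2 * bDelta ε δ / (M+2) ≤ 1/2 := by
    rw [hb, div_le_iff₀ hM2pos]
    nlinarith only [mul_le_mul (show 1+ε ≤ (101:ℝ)/100 by linarith only [hε]) ht12 ht0
      (by norm_num : (0:ℝ) ≤ 101/100), hM2, ht0, hε0]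
  have hKc : (1 - cDelta ε δ) / (M+2)^2 ≤ 1/8 := by
    rw [hc, div_le_iff₀ (by positivity : (0:ℝ) < (M+2)^2)]
    nlinarith only [sq_nonneg t, sq_nonneg ε, hε0, hε, h16,
      mul_le_mul_of_nonneg_right hε hε0.le]
  have hK : 0 < 1 + a - 2 * bDelta ε δ / (M+2) - (1 - cDelta ε δ) / (M+2)^2 := by linarith
  have h4K : 0 < 4 * (1 + a - 2 * bDelta ε δ / (M+2) - (1 - cDelta ε δ) / (M+2)^2) := by
    linarith
  have hu : (1:ℝ)/2 ≤ 1+ε-t := by linarith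
  have hεM : (0:ℝ) ≤ ε*M := mul_nonneg hε0.le (by linarith)
  have hF1 : 0 < X*M + (X+M)*(ε*M+(1+ε-t)) := by
    have h1 : 0 < X*M := mul_pos (by linarith) (by linarith)
    have h2 : 0 < (X+M)*(ε*M+(1+ε-t)) := mul_pos (by linarith) (by linarith)
    linarith
  have hF2 : 0 < (X-2)*(M+2) + (X+M)*(ε*(M+2)+(1+ε-t)) := by
    have h1 : 0 ≤ (X-2)*(M+2) := mul_nonneg (by linarith) (by linarith)
    have h2 : 0 < (X+M)*(ε*(M+2)+(1+ε-t)) := by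
      have : (0:ℝ) ≤ ε*(M+2) := mul_nonneg hε0.le (by linarith)
      exact mul_pos (by linarith) (by linarith)
    linarith
  have hden : (N:ℝ)^2 * ((X/(N:ℝ)*φ + ε*φ)*M - z) * (((X-2)/(N:ℝ)*φ + ε*φ)*(M+2) - z)
      = φ^2*((X*M + (X+M)*(ε*M+(1+ε-t))) * ((X-2)*(M+2) + (X+M)*(ε*(M+2)+(1+ε-t)))) := by
    rw [hz'', hXM]
    field_simp
    ring
  have hkey := key_ineq X M ε t (ε/(N:ℝ)^γ) (1/(N:ℝ)) hX2 hM2 hMX hε0 hε ht0 ht12 ht2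
    hA10 hA1 hA2
  have hkey' : (X*M + (X+M)*(ε*M+(1+ε-t))) * ((X-2)*(M+2) + (X+M)*(ε*(M+2)+(1+ε-t)))
      ≤ (X-1)*X*((M+2)^2*(1+a) - 2*((1+ε)*t)*(M+2) + (t^2-(ε^2+2*ε)) - 1) := by
    rw [ha]; exact hkey
  have hexp : (X-1)*X*φ^2*(M/2+1)^2
        * (4 * (1 + a - 2 * bDelta ε δ / (M+2) - (1 - cDelta ε δ) / (M+2)^2))
      = φ^2*((X-1)*X*((M+2)^2*(1+a) - 2*((1+ε)*t)*(M+2) + (t^2-(ε^2+2*ε)) - 1)) := by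
    rw [hb, hc]
    field_simp
    ring
  have hDen : 0 < (N:ℝ)^2 * ((X/(N:ℝ)*φ + ε*φ)*M - z) * (((X-2)/(N:ℝ)*φ + ε*φ)*(M+2) - z) := by
    rw [hden]
    exact mul_pos (pow_pos hφ 2) (mul_pos hF1 hF2)
  rw [ge_iff_le]
  simp only [Wcal]
  rw [← hX_def, ← hM_def]
  rw [div_le_div_iff₀ h4K hDen]
  rw [hden]
  calc 1 * (φ^2*((X*M + (X+M)*(ε*M+(1+ε-t))) * ((X-2)*(M+2) + (X+M)*(ε*(M+2)+(1+ε-t)))))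
      ≤ φ^2*((X-1)*X*((M+2)^2*(1+a) - 2*((1+ε)*t)*(M+2) + (t^2-(ε^2+2*ε)) - 1)) := by
        rw [one_mul]
        exact mul_le_mul_of_nonneg_left hkey' (sq_nonneg φ)
    _ = (X-1)*X*φ^2*(M/2+1)^2
        * (4 * (1 + a - 2 * bDelta ε δ / (M+2) - (1 - cDelta ε δ) / (M+2)^2)) := hexp.symm
end

section
/- For every ε > 0, set e := −(ε+1−√(ε²+2ε)), a := ε²+2ε, and Y₂ := 1/( (3(1+ε) − √(ε²+2ε))·(ε+1−√(ε²+2ε)) ). Then: (i) Y₂ = (√a + √(1+a))/(3·√(1+a) − √a); and (ii) −e − (1/(2ε+2−e))·(1/Y₂) = 0. -/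
theorem stmt12 (ε : ℝ) (hε : 0 < ε) (e a Y₂ : ℝ)
    (he : e = -(ε + 1 - Real.sqrt (ε ^ 2 + 2 * ε)))
    (ha : a = ε ^ 2 + 2 * ε)
    (hY : Y₂ = 1 / ((3 * (1 + ε) - Real.sqrt (ε ^ 2 + 2 * ε))
        * (ε + 1 - Real.sqrt (ε ^ 2 + 2 * ε)))) :
    Y₂ = (Real.sqrt a + Real.sqrt (1 + a)) / (3 * Real.sqrt (1 + a) - Real.sqrt a)
    ∧ -e - (1 / (2 * ε + 2 - e)) * (1 / Y₂) = 0 := by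
  set s := Real.sqrt (ε ^ 2 + 2 * ε) with hs
  have hnn : (0:ℝ) ≤ ε ^ 2 + 2 * ε := by nlinarith
  have hs0 : 0 ≤ s := Real.sqrt_nonneg _
  have hs2 : s ^ 2 = ε ^ 2 + 2 * ε := Real.sq_sqrt hnn
  have hslt : s < ε + 1 := by
    rw [hs, show ε + 1 = Real.sqrt ((ε+1)^2) by rw [Real.sqrt_sq (by linarith)]]
    apply Real.sqrt_lt_sqrt hnn
    nlinarith
  have hsa : Real.sqrt a = s := by rw [ha]
  have h1a : Real.sqrt (1 + a) = ε + 1 := by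
    rw [ha, show 1 + (ε ^ 2 + 2 * ε) = (ε+1)^2 by ring, Real.sqrt_sq (by linarith)]
  have hd1 : 3 * (1 + ε) - s ≠ 0 := by nlinarith
  have hd2 : ε + 1 - s ≠ 0 := by nlinarith
  constructor
  · rw [hsa, h1a, hY]
    rw [div_eq_div_iff (by positivity) (by nlinarith)]
    nlinarith [hs2]
  · have hY0 : Y₂ ≠ 0 := by
      rw [hY]; positivity
    rw [he, hY]
    have : 2 * ε + 2 - -(ε + 1 - s) = 3 * (1 + ε) - s := by ring
    rw [this]
    field_simp
    ring
end
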